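/- Let t_m = m(m+1)/2. For every positive integer n, Σ_{π ⊢ n, mex(π) even} mex(π) = Σ_{m≥0} (2m+2) (p(n − t_{2m+1}) − p(n − t_{2m+2})), with p(j)=0 for j<0. -/

import Mathlib

open Finset

/-- The minimal excludant of a partition: the least positive integer not a part. -/
noncomputable def mex {n : ℕ} (π : Nat.Partition n) : ℕ :=
  sInf {m : ℕ | 0 < m ∧ m ∉ π.parts}

/-- Number of partitions of `n` with minimal excludant `m`. -/
noncomputable def pmex (m n : ℕ) : ℕ :=
  ((Finset.univ : Finset (Nat.Partition n)).filter (fun π => mex π = m)).card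

/-- The partition function, extended by `0` on negative integers. -/
noncomputable def pz (k : ℤ) : ℕ := if 0 ≤ k then Fintype.card (Nat.Partition k.toNat) else 0

/-- Number of partitions of `m` into distinct parts. -/
def qdist (m : ℕ) : ℕ := (Nat.Partition.distincts m).card

/-- A two-colored distinct-parts partition of `n`: a set of distinct (part, color)
pairs with positive parts summing to `n`. -/
def IsTCD (n : ℕ) (s : Finset (ℕ × Fin 2)) : Prop :=
  (∀ p ∈ s, 0 < p.1) ∧ ∑ p ∈ s, p.1 = n

noncomputable def D2 (n : ℕ) : ℕ := Set.ncard {s : Finset (ℕ × Fin 2) | IsTCD n s}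
noncomputable def D2e (n : ℕ) : ℕ :=
  Set.ncard {s : Finset (ℕ × Fin 2) | IsTCD n s ∧ Even s.card}
noncomputable def D2o (n : ℕ) : ℕ :=
  Set.ncard {s : Finset (ℕ × Fin 2) | IsTCD n s ∧ Odd s.card}

/-!
A partition has `mex > k` exactly when it contains each of `1, …, k` as a part; removing these
parts is a bijection onto the partitions of `n - t_k`. Hence `#{mex > k} = p(n - t_k)` and
`#{mex = k + 1} = p(n - t_k) - p(n - t_{k+1})`. Grouping the partitions of even mex by the value
`mex = 2m + 2` gives the formula; the range `m ≤ n` suffices because `mex ≤ n + 1`.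
-/

lemma sum_Icc_one_id (k : ℕ) : ∑ i ∈ Icc 1 k, i = k * (k + 1) / 2 := by
  have h := Finset.sum_range_id (k + 1)
  rwa [Nat.range_succ_eq_Icc_zero, ← sum_Ioc_add_eq_sum_Icc (Nat.zero_le k), add_zero,
    ← Icc_add_one_left_eq_Ioc, Nat.add_sub_cancel, Nat.mul_comm] at h

lemma pz_natCast_sub_of_le {n t : ℕ} (h : t ≤ n) :
    pz ((n : ℤ) - t) = Fintype.card (Nat.Partition (n - t)) := by
  rw [pz, if_pos (by omega), ← Int.toNat_natCast (n - t), Nat.cast_sub h]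

lemma pz_natCast_sub_of_lt {n t : ℕ} (h : n < t) : pz ((n : ℤ) - t) = 0 := by
  rw [pz, if_neg (by omega)]

namespace Nat.Partition

variable {n : ℕ}

lemma sum_parts_sub_add_sum {π : Nat.Partition n} {s : Multiset ℕ} (h : s ≤ π.parts) :
    (π.parts - s).sum + s.sum = n := by
  rw [← Multiset.sum_add, tsub_add_cancel_of_le h, π.parts_sum]

lemma card_filter_le_parts (s : Multiset ℕ) (hs : ∀ i ∈ s, 0 < i) :
    #{π : Nat.Partition n | s ≤ π.parts} = pz ((n : ℤ) - s.sum) := by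
  rcases le_or_gt s.sum n with hsn | hsn
  · rw [pz_natCast_sub_of_le hsn, ← Finset.card_univ]
    refine Finset.card_bij' (fun π hπ => ⟨π.parts - s, ?_, ?_⟩) (fun σ _ => ⟨σ.parts + s, ?_, ?_⟩)
      (fun _ _ => mem_univ _) (fun σ _ => by simp) ?_ ?_
    · exact fun hi => π.parts_pos (Multiset.mem_of_le tsub_le_self hi)
    · have := sum_parts_sub_add_sum (mem_filter.1 hπ).2
      omega
    · intro i hi
      rcases Multiset.mem_add.1 hi with hi | hi
      · exact σ.parts_pos hi
      · exact hs i hi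
    · rw [Multiset.sum_add, σ.parts_sum, Nat.sub_add_cancel hsn]
    · intro π hπ
      exact Nat.Partition.ext (tsub_add_cancel_of_le (mem_filter.1 hπ).2)
    · intro σ _
      exact Nat.Partition.ext (add_tsub_cancel_right _ _)
  · rw [pz_natCast_sub_of_lt hsn, Finset.card_eq_zero, Finset.filter_eq_empty_iff]
    intro π _ h
    have := sum_parts_sub_add_sum h
    omega

end Nat.Partition

section Mex

variable {n : ℕ}

lemma mex_pos_and_notMem_parts (π : Nat.Partition n) : 0 < mex π ∧ mex π ∉ π.parts :=
  Nat.sInf_mem (s := {m | 0 < m ∧ m ∉ π.parts})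
    ⟨n + 1, n.succ_pos, fun h => (Nat.Partition.le_of_mem_parts h).not_gt n.lt_succ_self⟩

lemma mex_le_of_notMem {π : Nat.Partition n} {i : ℕ} (hi : 0 < i) (h : i ∉ π.parts) :
    mex π ≤ i :=
  Nat.sInf_le ⟨hi, h⟩

lemma mex_le_succ (π : Nat.Partition n) : mex π ≤ n + 1 :=
  mex_le_of_notMem n.succ_pos fun h => (Nat.Partition.le_of_mem_parts h).not_gt n.lt_succ_self

lemma lt_mex_iff {π : Nat.Partition n} {k : ℕ} : k < mex π ↔ (Icc 1 k).val ≤ π.parts := by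
  rw [Multiset.le_iff_subset (Icc 1 k).nodup]
  constructor
  · intro hk i hi
    obtain ⟨hi1, hik⟩ := mem_Icc.1 (mem_def.2 hi)
    by_contra h
    have := mex_le_of_notMem hi1 h
    omega
  · intro h
    by_contra hk
    obtain ⟨hpos, hnot⟩ := mex_pos_and_notMem_parts π
    exact hnot (h (mem_Icc.2 ⟨hpos, not_lt.1 hk⟩))

end Mex

lemma card_lt_mex (n k : ℕ) :
    #{π : Nat.Partition n | k < mex π} = pz ((n : ℤ) - (k * (k + 1) / 2 : ℕ)) := by
  rw [filter_congr fun π _ => lt_mex_iff,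
    Nat.Partition.card_filter_le_parts _ fun i hi => (mem_Icc.1 (mem_def.2 hi)).1, sum_val,
    ← sum_Icc_one_id]
  rfl

lemma filter_mex_eq_succ (n k : ℕ) :
    ({π | mex π = k + 1} : Finset (Nat.Partition n)) =
      ({π | k < mex π} : Finset (Nat.Partition n)) \ ({π | k + 1 < mex π} : Finset _) := by
  ext π
  simp only [mem_filter, mem_sdiff, mem_univ, true_and]
  omega

lemma card_mex_eq_succ (n k : ℕ) :
    (#{π : Nat.Partition n | mex π = k + 1} : ℤ) =
      pz ((n : ℤ) - (k * (k + 1) / 2 : ℕ)) - pz ((n : ℤ) - ((k + 1) * (k + 2) / 2 : ℕ)) := by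
  have hsub : ({π | k + 1 < mex π} : Finset (Nat.Partition n)) ⊆
      ({π | k < mex π} : Finset _) :=
    monotone_filter_right _ fun π _ h => k.lt_succ_self.trans h
  rw [filter_mex_eq_succ, card_sdiff_of_subset hsub, Nat.cast_sub (card_le_card hsub),
    card_lt_mex, card_lt_mex]

lemma sum_filter_even_mex (n : ℕ) :
    ∑ π ∈ univ.filter (fun π : Nat.Partition n => Even (mex π)), (mex π : ℤ) =
      ∑ m ∈ range (n + 1), (2 * (m : ℤ) + 2) * #{π : Nat.Partition n | mex π = 2 * m + 2} := by
  have hmaps : ∀ π ∈ univ.filter (fun π : Nat.Partition n => Even (mex π)),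
      mex π / 2 - 1 ∈ range (n + 1) := fun π _ => by
    have := mex_le_succ π
    rw [mem_range]
    omega
  rw [← sum_fiberwise_of_maps_to hmaps]
  refine sum_congr rfl fun m _ => ?_
  have hfiber : {π ∈ univ.filter (fun π : Nat.Partition n => Even (mex π)) | mex π / 2 - 1 = m} =
      ({π | mex π = 2 * m + 2} : Finset _) := by
    ext π
    have := (mex_pos_and_notMem_parts π).1
    simp only [mem_filter, mem_univ, true_and, Nat.even_iff]
    omega
  rw [hfiber, sum_congr rfl fun π hπ => congrArg Nat.cast (mem_filter.1 hπ).2, sum_const,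
    nsmul_eq_mul]
  push_cast
  ring

theorem sigma_even_mex_formula_general (n : ℕ) :
    ∑ π ∈ Finset.univ.filter (fun π : Nat.Partition n => Even (mex π)), (mex π : ℤ) =
      ∑ m ∈ Finset.range (n + 1), (2 * (m : ℤ) + 2) *
        (pz ((n : ℤ) - ((2 * m + 1) * (2 * m + 2) / 2 : ℕ)) -
          pz ((n : ℤ) - ((2 * m + 2) * (2 * m + 3) / 2 : ℕ))) := by
  rw [sum_filter_even_mex]
  exact sum_congr rfl fun m _ => congrArg _ (card_mex_eq_succ n (2 * m + 1))

theorem sigma_even_mex_formula (n : ℕ) (hn : 0 < n) :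
    ∑ π ∈ Finset.univ.filter (fun π : Nat.Partition n => Even (mex π)), (mex π : ℤ) =
      ∑ m ∈ Finset.range (n + 1), (2 * (m : ℤ) + 2) *
        (pz ((n : ℤ) - ((2 * m + 1) * (2 * m + 2) / 2 : ℕ)) -
          pz ((n : ℤ) - ((2 * m + 2) * (2 * m + 3) / 2 : ℕ))) :=
  sigma_even_mex_formula_general n
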